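/- arXiv:0710.5456 — 3 statements merged into one kernel-verified Lean document; each statement's English description precedes it below -/
import Mathlib

section
/- If f : ℝ → ℝˣ satisfies the 2-cocycle relation f(x-y)·f(y-z)·f(z-x) = 1 for all x, y, z and f(x) ≠ 1 for all x ≠ 0, then C(x) := (f(x)+1)/(f(x)-1) satisfies C(x-y)C(y-z) + C(y-z)C(z-x) + C(z-x)C(x-y) = -1 for all pairwise distinct x, y, z. -/
def cayley {K : Type*} [Field K] (a : K) : K := (a + 1) / (a - 1)

-- After clearing denominators the difference of the two sides is `4 * (a * b * c - 1)`.
theorem cayley_mul_add_cayley_mul_add_cayley_mul_eq_neg_one {K : Type*} [Field K] {a b c : K}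
    (ha : a ≠ 1) (hb : b ≠ 1) (hc : c ≠ 1) (habc : a * b * c = 1) :
    cayley a * cayley b + cayley b * cayley c + cayley c * cayley a = -1 := by
  have ha' : a - 1 ≠ 0 := sub_ne_zero.mpr ha
  have hb' : b - 1 ≠ 0 := sub_ne_zero.mpr hb
  have hc' : c - 1 ≠ 0 := sub_ne_zero.mpr hc
  unfold cayley
  field_simp
  linear_combination 4 * habc

theorem cayley_rota_baxter_general (f : ℝ → ℝ)
    (hf1 : ∀ x, x ≠ 0 → f x ≠ 1)
    (hcocycle : ∀ x y z : ℝ, x - y ≠ 0 → y - z ≠ 0 → z - x ≠ 0 →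
      f (x - y) * f (y - z) * f (z - x) = 1) :
    ∀ x y z : ℝ, x ≠ y → y ≠ z → z ≠ x →
      (fun t => (f t + 1) / (f t - 1)) (x - y) * (fun t => (f t + 1) / (f t - 1)) (y - z)
        + (fun t => (f t + 1) / (f t - 1)) (y - z) * (fun t => (f t + 1) / (f t - 1)) (z - x)
        + (fun t => (f t + 1) / (f t - 1)) (z - x) * (fun t => (f t + 1) / (f t - 1)) (x - y)
      = -1 := by
  intro x y z hxy hyz hzx
  have hxy' : x - y ≠ 0 := sub_ne_zero.mpr hxy
  have hyz' : y - z ≠ 0 := sub_ne_zero.mpr hyz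
  have hzx' : z - x ≠ 0 := sub_ne_zero.mpr hzx
  exact cayley_mul_add_cayley_mul_add_cayley_mul_eq_neg_one (hf1 _ hxy') (hf1 _ hyz') (hf1 _ hzx')
    (hcocycle x y z hxy' hyz' hzx')

/-- The Cayley transform of a multiplicative 2-cocycle solves the Rota–Baxter equation. -/
theorem cayley_rota_baxter (f : ℝ → ℝ)
    (hf0 : ∀ x, f x ≠ 0)
    (hf1 : ∀ x, x ≠ 0 → f x ≠ 1)
    (hcocycle : ∀ x y z : ℝ, x - y ≠ 0 → y - z ≠ 0 → z - x ≠ 0 →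
      f (x - y) * f (y - z) * f (z - x) = 1) :
    ∀ x y z : ℝ, x ≠ y → y ≠ z → z ≠ x →
      (fun t => (f t + 1) / (f t - 1)) (x - y) * (fun t => (f t + 1) / (f t - 1)) (y - z)
        + (fun t => (f t + 1) / (f t - 1)) (y - z) * (fun t => (f t + 1) / (f t - 1)) (z - x)
        + (fun t => (f t + 1) / (f t - 1)) (z - x) * (fun t => (f t + 1) / (f t - 1)) (x - y)
      = -1 :=
  cayley_rota_baxter_general f hf1 hcocycle
end

section
/- The bracket {η(x), η(y)} = η(x)² - η(y)² - sign(x-y)(η(x) - η(y))² satisfies the Jacobi identity in the following pointwise sense: defining B(a,b;s) = a² - b² - s(a-b)² for values a = η(x), b = η(y) and s = sign(x-y), the cyclic sum over three distinct points x, y, z of the induced triple brackets vanishes. Concretely, for pairwise distinct reals x, y, z and any values a, b, c ∈ ℝ (representing η(x), η(y), η(z)), setting s₁ = sign(x-y), s₂ = sign(y-z), s₃ = sign(z-x), the expression ∂₁B(a,b;s₁)·B(a,c;−s₃) + ∂₂B(a,b;s₁)·B(b,c;s₂) + (cyclic in (a,s₁)→(b,s₂)→(c,s₃)) equals zero, where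 ∂₁, ∂₂ denote partial derivatives in the first and second slot. -/
/-- The exchange bracket structure function. -/
def exchB (a b s : ℝ) : ℝ := a ^ 2 - b ^ 2 - s * (a - b) ^ 2

/-- Partial derivative of `exchB` in the first slot. -/
def exchB₁ (a b s : ℝ) : ℝ := 2 * a - 2 * s * (a - b)

/-- Partial derivative of `exchB` in the second slot. -/
def exchB₂ (a b s : ℝ) : ℝ := -2 * b + 2 * s * (a - b)

/-- Pointwise Jacobi identity for the bracket
`{η(x),η(y)} = η(x)² - η(y)² - sign(x-y)(η(x)-η(y))²`. -/
theorem exchange_bracket_jacobi (x y z : ℝ) (hxy : x ≠ y) (hyz : y ≠ z) (hzx : z ≠ x)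
    (a b c : ℝ) :
    exchB₁ a b (Real.sign (x - y)) * exchB a c (-(Real.sign (z - x)))
      + exchB₂ a b (Real.sign (x - y)) * exchB b c (Real.sign (y - z))
      + exchB₁ b c (Real.sign (y - z)) * exchB b a (-(Real.sign (x - y)))
      + exchB₂ b c (Real.sign (y - z)) * exchB c a (Real.sign (z - x))
      + exchB₁ c a (Real.sign (z - x)) * exchB c b (-(Real.sign (y - z)))
      + exchB₂ c a (Real.sign (z - x)) * exchB a b (Real.sign (x - y)) = 0 := by
  have key : ∀ u v : ℝ, u < v → Real.sign (u - v) = -1 ∧ Real.sign (v - u) = 1 := by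
    intro u v h
    exact ⟨Real.sign_of_neg (by linarith), Real.sign_of_pos (by linarith)⟩
  have main : ∀ s1 s2 s3 : ℝ,
      (s1 = -1 ∨ s1 = 1) → (s2 = -1 ∨ s2 = 1) → (s3 = -1 ∨ s3 = 1) →
      s1 * s2 + s2 * s3 + s3 * s1 = -1 →
      exchB₁ a b s1 * exchB a c (-s3)
      + exchB₂ a b s1 * exchB b c s2
      + exchB₁ b c s2 * exchB b a (-s1)
      + exchB₂ b c s2 * exchB c a s3
      + exchB₁ c a s3 * exchB c b (-s2)
      + exchB₂ c a s3 * exchB a b s1 = 0 := by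
    intro s1 s2 s3 h1 h2 h3 hsum
    simp only [exchB, exchB₁, exchB₂]
    rcases h1 with h1 | h1 <;> rcases h2 with h2 | h2 <;> rcases h3 with h3 | h3 <;>
      subst h1 <;> subst h2 <;> subst h3 <;>
      first | ring1 | (exfalso; norm_num at hsum)
  rcases lt_trichotomy x y with h1 | h1 | h1
  · rcases lt_trichotomy y z with h2 | h2 | h2
    · rw [(key x y h1).1, (key y z h2).1, (key x z (h1.trans h2)).2]
      exact main _ _ _ (Or.inl rfl) (Or.inl rfl) (Or.inr rfl) (by norm_num)
    · exact absurd h2 hyz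
    · rcases lt_trichotomy x z with h3 | h3 | h3
      · rw [(key x y h1).1, (key z y h2).2, (key x z h3).2]
        exact main _ _ _ (Or.inl rfl) (Or.inr rfl) (Or.inr rfl) (by norm_num)
      · exact absurd h3.symm hzx
      · rw [(key x y h1).1, (key z y h2).2, (key z x h3).1]
        exact main _ _ _ (Or.inl rfl) (Or.inr rfl) (Or.inl rfl) (by norm_num)
  · exact absurd h1 hxy
  · rcases lt_trichotomy y z with h2 | h2 | h2
    · rcases lt_trichotomy x z with h3 | h3 | h3
      · rw [(key y x h1).2, (key y z h2).1, (key x z h3).2]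
        exact main _ _ _ (Or.inr rfl) (Or.inl rfl) (Or.inr rfl) (by norm_num)
      · exact absurd h3.symm hzx
      · rw [(key y x h1).2, (key y z h2).1, (key z x h3).1]
        exact main _ _ _ (Or.inr rfl) (Or.inl rfl) (Or.inl rfl) (by norm_num)
    · exact absurd h2 hyz
    · rw [(key y x h1).2, (key z y h2).2, (key z x (h2.trans h1)).1]
      exact main _ _ _ (Or.inr rfl) (Or.inr rfl) (Or.inl rfl) (by norm_num)
end

section
/- For a non-degenerate solution of the discrete Schroedinger equation, the cross-ratio of four consecutive points of the projective configuration equals the product of consecutive potentials: s_n := [η_n, η_{n+1}, η_{n+2}, η_{n+3}] = ((η_n - η_{n+2})/(η_n - η_{n+1}))·((η_{n+1} - η_{n+3})/(η_{n+2} - η_{n+3})) satisfies s_n = u_n · u_{n+1}. -/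
/-!
Writing `η = φ / ψ`, every difference `η a - η b` is the Casoratian `φ a ψ b - φ b ψ a` divided by
`ψ a ψ b`, and in the cross-ratio the factors `ψ` cancel, leaving a ratio of Casoratians.
The Wronskian normalisation makes the Casoratian of neighbouring indices `-1`, and eliminating
`φ (n + 2)`, `ψ (n + 2)` with the recurrence turns the Casoratian of indices `n, n + 2` into `u n`.
-/

theorem cross_ratio_div_eq {K : Type*} [Field K] {x₀ x₁ x₂ x₃ y₀ y₁ y₂ y₃ : K}
    (h₀ : y₀ ≠ 0) (h₁ : y₁ ≠ 0) (h₂ : y₂ ≠ 0) (h₃ : y₃ ≠ 0) :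
    (x₀ / y₀ - x₂ / y₂) / (x₀ / y₀ - x₁ / y₁) * ((x₁ / y₁ - x₃ / y₃) / (x₂ / y₂ - x₃ / y₃))
      = (x₀ * y₂ - y₀ * x₂) * (x₁ * y₃ - y₁ * x₃)
          / ((x₀ * y₁ - y₀ * x₁) * (x₂ * y₃ - y₂ * x₃)) := by
  rw [div_sub_div _ _ h₀ h₂, div_sub_div _ _ h₀ h₁, div_sub_div _ _ h₁ h₃,
    div_sub_div _ _ h₂ h₃, div_div_div_eq, div_div_div_eq, div_mul_div_comm]
  have hy : y₀ * y₁ * y₂ * y₃ ≠ 0 := by simp [*]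
  calc _ = (x₀ * y₂ - y₀ * x₂) * (x₁ * y₃ - y₁ * x₃) * (y₀ * y₁ * y₂ * y₃)
        / ((x₀ * y₁ - y₀ * x₁) * (x₂ * y₃ - y₂ * x₃) * (y₀ * y₁ * y₂ * y₃)) := by
          congr 1 <;> ring
    _ = _ := mul_div_mul_right _ _ hy

theorem casoratian_add_two {R : Type*} [CommRing R] {u φ ψ : ℤ → R}
    (hφ : ∀ n, φ (n + 2) + u n * φ (n + 1) + φ n = 0)
    (hψ : ∀ n, ψ (n + 2) + u n * ψ (n + 1) + ψ n = 0)
    (hW : ∀ n, φ (n + 1) * ψ n - φ n * ψ (n + 1) = 1) (n : ℤ) :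
    φ n * ψ (n + 2) - ψ n * φ (n + 2) = u n := by
  linear_combination φ n * hψ n - ψ n * hφ n + u n * hW n

theorem cross_ratio_eq_potential_product_general (u φ ψ : ℤ → ℂ)
    (hφ : ∀ n, φ (n + 2) + u n * φ (n + 1) + φ n = 0)
    (hψ : ∀ n, ψ (n + 2) + u n * ψ (n + 1) + ψ n = 0)
    (hW : ∀ n, φ n * ψ (n - 1) - φ (n - 1) * ψ n = 1)
    (hψ0 : ∀ n, ψ n ≠ 0)
    (η : ℤ → ℂ) (hη : ∀ n, η n = φ n / ψ n)
    (n : ℤ) :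
    (η n - η (n + 2)) / (η n - η (n + 1))
      * ((η (n + 1) - η (n + 3)) / (η (n + 2) - η (n + 3)))
    = u n * u (n + 1) := by
  have hW' (k : ℤ) : φ (k + 1) * ψ k - φ k * ψ (k + 1) = 1 := by simpa using hW (k + 1)
  have hC₀₁ (k : ℤ) : φ k * ψ (k + 1) - ψ k * φ (k + 1) = -1 := by linear_combination -hW' k
  have hC₂₃ := hC₀₁ (n + 2)
  have hC₁₃ := casoratian_add_two hφ hψ hW' (n + 1)
  simp only [add_assoc, Int.reduceAdd] at hC₂₃ hC₁₃
  rw [hη, hη, hη, hη, cross_ratio_div_eq (hψ0 _) (hψ0 _) (hψ0 _) (hψ0 _),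
    casoratian_add_two hφ hψ hW', hC₀₁, hC₂₃, hC₁₃]
  ring

/-- The cross-ratio of four consecutive points of the projective configuration
equals the product of consecutive potentials: `s_n = u_n · u_{n+1}`. -/
theorem cross_ratio_eq_potential_product (u φ ψ : ℤ → ℂ)
    (hφ : ∀ n, φ (n + 2) + u n * φ (n + 1) + φ n = 0)
    (hψ : ∀ n, ψ (n + 2) + u n * ψ (n + 1) + ψ n = 0)
    (hW : ∀ n, φ n * ψ (n - 1) - φ (n - 1) * ψ n = 1)
    (hψ0 : ∀ n, ψ n ≠ 0)
    (η : ℤ → ℂ) (hη : ∀ n, η n = φ n / ψ n)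
    (hnd : ∀ n, η n ≠ η (n + 1))
    (n : ℤ)
    (h1 : η n - η (n + 1) ≠ 0) (h2 : η (n + 2) - η (n + 3) ≠ 0) :
    (η n - η (n + 2)) / (η n - η (n + 1))
      * ((η (n + 1) - η (n + 3)) / (η (n + 2) - η (n + 3)))
    = u n * u (n + 1) :=
  cross_ratio_eq_potential_product_general u φ ψ hφ hψ hW hψ0 η hη n
end
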